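/- arXiv:1511.01571 — 10 statements merged into one kernel-verified Lean document; each statement's English description precedes it below -/
import Mathlib

section
/- For every S ∈ H, S ⊔ S* = ⊤ (excluded middle for the paraconsistent negation *). -/
/-- The third quantum negation: `S* = δ (ε S)ᗮ`. -/
def qstar {L H : Type*} [CompleteLattice L] [CompleteLattice H]
    (δ : L → H) (ε : H → L) (oc : L → L) (S : H) : H :=
  δ (oc (ε S))

/-- Excluded middle for `*`: `S ⊔ S* = ⊤`. -/
theorem qstar_excluded_middle
    {L H : Type*} [CompleteLattice L] [CompleteLattice H]
    (δ : L → H) (ε : H → L) (oc : L → L)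
    (hδ : ∀ s : Set L, δ (sSup s) = ⨆ a ∈ s, δ a)
    (hε : ∀ S : H, ε S = sSup {a : L | δ a ≤ S})
    (hinj : Function.Injective δ) (hδtop : δ ⊤ = ⊤)
    (hoc1 : ∀ x : L, x ⊔ oc x = ⊤) (hoc2 : ∀ x : L, x ⊓ oc x = ⊥)
    (hoc3 : ∀ x y : L, x ≤ y → oc y ≤ oc x) (hoc4 : ∀ x : L, oc (oc x) = x) :
    ∀ S : H, S ⊔ qstar δ ε oc S = ⊤ := by
  intro S
  have hsup : ∀ a b : L, δ (a ⊔ b) = δ a ⊔ δ b := by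
    intro a b
    have := hδ {a, b}
    rw [sSup_pair] at this; rw [this, iSup_pair]
  have hεle : δ (ε S) ≤ S := by
    rw [hε, hδ]
    exact iSup₂_le fun a ha => ha
  have : δ (ε S ⊔ oc (ε S)) = ⊤ := by rw [hoc1, hδtop]
  rw [hsup] at this
  rw [eq_top_iff, ← this]
  exact sup_le_sup_right hεle _ |>.trans_eq rfl
end

section
/- For every S ∈ H, S** ≤ S and S*** = S*. -/
/-- `S** ≤ S` and `S*** = S*`. -/
theorem qstar_double_neg
    {L H : Type*} [CompleteLattice L] [CompleteLattice H]
    (δ : L → H) (ε : H → L) (oc : L → L)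
    (hδ : ∀ s : Set L, δ (sSup s) = ⨆ a ∈ s, δ a)
    (hε : ∀ S : H, ε S = sSup {a : L | δ a ≤ S})
    (hinj : Function.Injective δ) (hδtop : δ ⊤ = ⊤)
    (hoc1 : ∀ x : L, x ⊔ oc x = ⊤) (hoc2 : ∀ x : L, x ⊓ oc x = ⊥)
    (hoc3 : ∀ x y : L, x ≤ y → oc y ≤ oc x) (hoc4 : ∀ x : L, oc (oc x) = x) :
    ∀ S : H, qstar δ ε oc (qstar δ ε oc S) ≤ S ∧
      qstar δ ε oc (qstar δ ε oc (qstar δ ε oc S)) = qstar δ ε oc S := by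
  have hmono : Monotone δ := by
    intro a b hab
    have h := hδ {a, b}
    rw [sSup_pair, sup_eq_right.mpr hab] at h
    rw [h]
    exact le_iSup_of_le a (by simp)
  have hδε : ∀ S : H, δ (ε S) ≤ S := by
    intro S
    rw [hε, hδ]
    exact iSup₂_le fun a ha => ha
  have hle : ∀ (a : L) (S : H), δ a ≤ S → a ≤ ε S := by
    intro a S h
    rw [hε]; exact le_sSup h
  have hεδ : ∀ a : L, ε (δ a) = a := by
    intro a
    refine hinj (le_antisymm (hδε _) (hmono (hle a _ le_rfl)))
  intro S
  have h1 : qstar δ ε oc (qstar δ ε oc S) ≤ S := by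
    simp only [qstar, hεδ, hoc4]
    exact hδε S
  refine ⟨h1, ?_⟩
  simp only [qstar, hεδ, hoc4]
end

section
/- For all S, T ∈ H, (S ⊓ T)* = S* ⊔ T*. -/
/-- De Morgan: `(S ⊓ T)* = S* ⊔ T*`. -/
theorem qstar_inf
    {L H : Type*} [CompleteLattice L] [CompleteLattice H]
    (δ : L → H) (ε : H → L) (oc : L → L)
    (hδ : ∀ s : Set L, δ (sSup s) = ⨆ a ∈ s, δ a)
    (hε : ∀ S : H, ε S = sSup {a : L | δ a ≤ S})
    (hinj : Function.Injective δ) (hδtop : δ ⊤ = ⊤)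
    (hoc1 : ∀ x : L, x ⊔ oc x = ⊤) (hoc2 : ∀ x : L, x ⊓ oc x = ⊥)
    (hoc3 : ∀ x y : L, x ≤ y → oc y ≤ oc x) (hoc4 : ∀ x : L, oc (oc x) = x) :
    ∀ S T : H, qstar δ ε oc (S ⊓ T) = qstar δ ε oc S ⊔ qstar δ ε oc T := by
  -- δ is monotone
  have hmono : ∀ a b : L, a ≤ b → δ a ≤ δ b := by
    intro a b hab
    have h : δ (sSup {a, b}) = ⨆ x ∈ ({a, b} : Set L), δ x := hδ _
    have hs : sSup ({a, b} : Set L) = b := by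
      simp [sSup_pair, sup_eq_right.mpr hab]
    rw [hs] at h
    rw [h]
    exact le_iSup₂ (f := fun x (_ : x ∈ ({a,b} : Set L)) => δ x) a (by simp)
  -- δ preserves binary sups
  have hsup : ∀ a b : L, δ (a ⊔ b) = δ a ⊔ δ b := by
    intro a b
    have h : δ (sSup {a, b}) = ⨆ x ∈ ({a, b} : Set L), δ x := hδ _
    rw [sSup_pair] at h
    rw [h, iSup_pair]
  -- adjunction
  have hadj : ∀ (a : L) (S : H), δ a ≤ S ↔ a ≤ ε S := by
    intro a S
    constructor
    · intro h; rw [hε]; exact le_sSup h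
    · intro h
      have h1 : δ a ≤ δ (ε S) := hmono _ _ h
      have h2 : δ (ε S) ≤ S := by
        rw [hε, hδ]
        exact iSup₂_le fun x hx => hx
      exact h1.trans h2
  -- ε preserves binary infs
  have hεinf : ∀ S T : H, ε (S ⊓ T) = ε S ⊓ ε T := by
    intro S T
    apply le_antisymm
    · exact le_inf ((hadj _ _).mp (((hadj _ _).mpr le_rfl).trans inf_le_left))
        ((hadj _ _).mp (((hadj _ _).mpr le_rfl).trans inf_le_right))
    · apply (hadj _ _).mp
      exact le_inf ((hadj _ _).mpr inf_le_left) ((hadj _ _).mpr inf_le_right)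
  -- de Morgan in L
  have hdm : ∀ a b : L, oc (a ⊓ b) = oc a ⊔ oc b := by
    intro a b
    apply le_antisymm
    · have h1 : oc (oc a ⊔ oc b) ≤ a ⊓ b := by
        refine le_inf ?_ ?_
        · have := hoc3 _ _ (le_sup_left : oc a ≤ oc a ⊔ oc b)
          rwa [hoc4] at this
        · have := hoc3 _ _ (le_sup_right : oc b ≤ oc a ⊔ oc b)
          rwa [hoc4] at this
      have := hoc3 _ _ h1
      rwa [hoc4] at this
    · exact sup_le (hoc3 _ _ inf_le_left) (hoc3 _ _ inf_le_right)
  intro S T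
  simp only [qstar, hεinf, hdm, hsup]
end

section
/- For every S ∈ H, ε(S) ⊔ ε(S*) = ⊤ and ε(S) ⊓ ε(S*) = ⊥. -/
/-- `ε S ⊔ ε (S*) = ⊤` and `ε S ⊓ ε (S*) = ⊥`. -/
theorem epsilon_qstar
    {L H : Type*} [CompleteLattice L] [CompleteLattice H]
    (δ : L → H) (ε : H → L) (oc : L → L)
    (hδ : ∀ s : Set L, δ (sSup s) = ⨆ a ∈ s, δ a)
    (hε : ∀ S : H, ε S = sSup {a : L | δ a ≤ S})
    (hinj : Function.Injective δ) (hδtop : δ ⊤ = ⊤)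
    (hoc1 : ∀ x : L, x ⊔ oc x = ⊤) (hoc2 : ∀ x : L, x ⊓ oc x = ⊥)
    (hoc3 : ∀ x y : L, x ≤ y → oc y ≤ oc x) (hoc4 : ∀ x : L, oc (oc x) = x) :
    ∀ S : H, ε S ⊔ ε (qstar δ ε oc S) = ⊤ ∧ ε S ⊓ ε (qstar δ ε oc S) = ⊥ := by
  have hsup : ∀ a b : L, δ (a ⊔ b) = δ a ⊔ δ b := by
    intro a b
    have := hδ {a, b}
    rw [sSup_pair] at this; rw [this, iSup_pair]
  have hle : ∀ a b : L, δ a ≤ δ b → a ≤ b := by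
    intro a b h
    have : δ (a ⊔ b) = δ b := by rw [hsup]; exact sup_eq_right.mpr h
    have := hinj this
    exact le_of_sup_eq this
  have hεδ : ∀ a : L, ε (δ a) = a := by
    intro a
    rw [hε]
    apply le_antisymm
    · exact sSup_le fun b hb => hle b a hb
    · exact le_sSup (le_refl (δ a))
  intro S
  have key : ε (qstar δ ε oc S) = oc (ε S) := hεδ _
  rw [key]
  exact ⟨hoc1 _, hoc2 _⟩
end

section
/- The negation * is compatible with the orthocomplementation through δ and ε: for every a ∈ L, (δ(a))* = δ(aᗮ), and for every S ∈ H, ε(S*) = ε(S)ᗮ. (Consequently the isomorphism between the quotient E of H by the relation ε(S) = ε(T) and L extends to an isomorphism of the * structure with the orthocomplemented structure of L.) -/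
/-- `(δ a)* = δ (aᗮ)` and `ε (S*) = (ε S)ᗮ`. -/
theorem qstar_compatible
    {L H : Type*} [CompleteLattice L] [CompleteLattice H]
    (δ : L → H) (ε : H → L) (oc : L → L)
    (hδ : ∀ s : Set L, δ (sSup s) = ⨆ a ∈ s, δ a)
    (hε : ∀ S : H, ε S = sSup {a : L | δ a ≤ S})
    (hinj : Function.Injective δ) (hδtop : δ ⊤ = ⊤)
    (hoc1 : ∀ x : L, x ⊔ oc x = ⊤) (hoc2 : ∀ x : L, x ⊓ oc x = ⊥)
    (hoc3 : ∀ x y : L, x ≤ y → oc y ≤ oc x) (hoc4 : ∀ x : L, oc (oc x) = x) :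
    (∀ a : L, qstar δ ε oc (δ a) = δ (oc a)) ∧ (∀ S : H, ε (qstar δ ε oc S) = oc (ε S)) := by
  have hmono : ∀ a b : L, a ≤ b → δ a ≤ δ b := by
    intro a b hab
    have h := hδ {a, b}
    rw [sSup_pair, sup_eq_right.mpr hab] at h
    rw [h]
    exact le_iSup₂ (f := fun x (_ : x ∈ ({a, b} : Set L)) => δ x) a (by simp)
  have hrefl : ∀ a b : L, δ a ≤ δ b → a ≤ b := by
    intro a b hab
    have h := hδ {a, b}
    rw [sSup_pair] at h
    have : δ (a ⊔ b) = δ b := by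
      rw [h]
      apply le_antisymm
      · apply iSup₂_le
        rintro x (rfl | rfl)
        · exact hab
        · exact le_rfl
      · exact le_iSup₂ (f := fun x (_ : x ∈ ({a, b} : Set L)) => δ x) b (by simp)
    have := hinj this
    exact le_of_sup_eq this
  have hεδ : ∀ a : L, ε (δ a) = a := by
    intro a
    rw [hε]
    apply le_antisymm
    · apply sSup_le
      intro b hb
      exact hrefl b a hb
    · exact le_sSup le_rfl
  constructor
  · intro a
    unfold qstar
    rw [hεδ]
  · intro S
    unfold qstar
    rw [hεδ]
end

section
/- For all S, T ∈ H, if ε(S) = ε(T) then S* ⊔ T = ⊤ and T* ⊔ S = ⊤ (i.e. elements in the same equivalence class [S] = [T] of the quotient E satisfy the excluded-middle-style law needed for the injectivity proof of the map G). -/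
/-- If `ε S = ε T` then `S* ⊔ T = ⊤` and `T* ⊔ S = ⊤`. -/
theorem qstar_same_class
    {L H : Type*} [CompleteLattice L] [CompleteLattice H]
    (δ : L → H) (ε : H → L) (oc : L → L)
    (hδ : ∀ s : Set L, δ (sSup s) = ⨆ a ∈ s, δ a)
    (hε : ∀ S : H, ε S = sSup {a : L | δ a ≤ S})
    (hinj : Function.Injective δ) (hδtop : δ ⊤ = ⊤)
    (hoc1 : ∀ x : L, x ⊔ oc x = ⊤) (hoc2 : ∀ x : L, x ⊓ oc x = ⊥)
    (hoc3 : ∀ x y : L, x ≤ y → oc y ≤ oc x) (hoc4 : ∀ x : L, oc (oc x) = x) :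
    ∀ S T : H, ε S = ε T → qstar δ ε oc S ⊔ T = ⊤ ∧ qstar δ ε oc T ⊔ S = ⊤ := by
  have hsup : ∀ a b : L, δ (a ⊔ b) = δ a ⊔ δ b := by
    intro a b
    have := hδ {a, b}
    rw [sSup_pair] at this; rw [this, iSup_pair]
  have hle : ∀ S : H, δ (ε S) ≤ S := by
    intro S
    rw [hε S, hδ]
    exact iSup₂_le fun a ha => ha
  have key : ∀ S T : H, ε S = ε T → qstar δ ε oc S ⊔ T = ⊤ := by
    intro S T h
    have : (⊤ : H) ≤ qstar δ ε oc S ⊔ T := by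
      calc (⊤ : H) = δ (oc (ε S) ⊔ ε S) := by rw [sup_comm, hoc1, hδtop]
        _ = δ (oc (ε S)) ⊔ δ (ε T) := by rw [hsup, h]
        _ ≤ qstar δ ε oc S ⊔ T := sup_le_sup_left (hle T) _ |>.trans_eq rfl
    exact top_le_iff.mp this
  intro S T h
  exact ⟨key S T h, key T S h.symm⟩
end

section
/- ⊤* = ⊥, and modus ponens is valid for the implication S ⇒ T := S* ⊔ T: for all S, T ∈ H, if S = ⊤ and S* ⊔ T = ⊤ then T = ⊤. -/
/-- `⊤* = ⊥`, and modus ponens holds for `S ⇒ T := S* ⊔ T`. -/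
theorem qstar_top_and_mp
    {L H : Type*} [CompleteLattice L] [CompleteLattice H]
    (δ : L → H) (ε : H → L) (oc : L → L)
    (hδ : ∀ s : Set L, δ (sSup s) = ⨆ a ∈ s, δ a)
    (hε : ∀ S : H, ε S = sSup {a : L | δ a ≤ S})
    (hinj : Function.Injective δ) (hδtop : δ ⊤ = ⊤)
    (hoc1 : ∀ x : L, x ⊔ oc x = ⊤) (hoc2 : ∀ x : L, x ⊓ oc x = ⊥)
    (hoc3 : ∀ x y : L, x ≤ y → oc y ≤ oc x) (hoc4 : ∀ x : L, oc (oc x) = x) :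
    qstar δ ε oc (⊤ : H) = ⊥ ∧
      ∀ S T : H, S = ⊤ → qstar δ ε oc S ⊔ T = ⊤ → T = ⊤ := by
  have hδbot : δ (⊥ : L) = ⊥ := by
    have := hδ (∅ : Set L)
    simpa using this
  have hεtop : ε (⊤ : H) = ⊤ := by
    rw [hε]
    have : {a : L | δ a ≤ ⊤} = Set.univ := by
      ext a; simp
    rw [this, sSup_univ]
  have hoctop : oc (⊤ : L) = ⊥ := by
    have := hoc2 (⊤ : L)
    simpa using this
  have hqtop : qstar δ ε oc (⊤ : H) = ⊥ := by
    unfold qstar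
    rw [hεtop, hoctop, hδbot]
  refine ⟨hqtop, ?_⟩
  intro S T hS hST
  subst hS
  rw [hqtop, bot_sup_eq] at hST
  exact hST
end

section
/- With the implication S ⇒ T := S* ⊔ T, the contraposition axiom and the double-negation-elimination axiom of the logic of paraconsistent set theory are valid in H: for all S, T ∈ H, (S ⇒ T*) ⇒ (T ⇒ S*) = ⊤ and (S**) ⇒ S = ⊤. -/
/-- Contraposition and double negation elimination are valid for `S ⇒ T := S* ⊔ T`. -/
theorem qstar_contraposition_dne
    {L H : Type*} [CompleteLattice L] [CompleteLattice H]
    (δ : L → H) (ε : H → L) (oc : L → L)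
    (hδ : ∀ s : Set L, δ (sSup s) = ⨆ a ∈ s, δ a)
    (hε : ∀ S : H, ε S = sSup {a : L | δ a ≤ S})
    (hinj : Function.Injective δ) (hδtop : δ ⊤ = ⊤)
    (hoc1 : ∀ x : L, x ⊔ oc x = ⊤) (hoc2 : ∀ x : L, x ⊓ oc x = ⊥)
    (hoc3 : ∀ x y : L, x ≤ y → oc y ≤ oc x) (hoc4 : ∀ x : L, oc (oc x) = x) :
    ∀ S T : H,
      qstar δ ε oc (qstar δ ε oc S ⊔ qstar δ ε oc T) ⊔ (qstar δ ε oc T ⊔ qstar δ ε oc S) = ⊤ ∧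
      qstar δ ε oc (qstar δ ε oc (qstar δ ε oc S)) ⊔ S = ⊤ := by
  -- δ preserves binary joins
  have hsup : ∀ a b : L, δ (a ⊔ b) = δ a ⊔ δ b := by
    intro a b
    have : sSup ({a, b} : Set L) = a ⊔ b := by simp
    rw [← this, hδ, iSup_pair]
  -- δ is monotone
  have hmono : ∀ a b : L, a ≤ b → δ a ≤ δ b := by
    intro a b hab
    have : a ⊔ b = b := sup_eq_right.mpr hab
    calc δ a ≤ δ a ⊔ δ b := le_sup_left
      _ = δ (a ⊔ b) := (hsup a b).symm
      _ = δ b := by rw [this]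
  -- counit: δ (ε S) ≤ S
  have hcounit : ∀ S : H, δ (ε S) ≤ S := by
    intro S
    rw [hε, hδ]
    exact iSup₂_le fun a ha => ha
  -- unit: a ≤ ε (δ a)
  have hunit : ∀ a : L, a ≤ ε (δ a) := by
    intro a
    rw [hε]
    exact le_sSup le_rfl
  -- qstar U ⊔ U = ⊤
  have hkey : ∀ U : H, qstar δ ε oc U ⊔ U = ⊤ := by
    intro U
    have h1 : δ (oc (ε U)) ⊔ δ (ε U) = ⊤ := by
      rw [← hsup, sup_comm, hoc1, hδtop]
    refine le_antisymm le_top ?_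
    rw [← h1]
    exact sup_le_sup le_rfl (hcounit U)
  -- qstar (qstar S) ≤ S
  have hqq : ∀ S : H, qstar δ ε oc (qstar δ ε oc S) ≤ S := by
    intro S
    have h1 : oc (ε S) ≤ ε (δ (oc (ε S))) := hunit _
    have h2 : oc (ε (δ (oc (ε S)))) ≤ oc (oc (ε S)) := hoc3 _ _ h1
    rw [hoc4] at h2
    calc qstar δ ε oc (qstar δ ε oc S) = δ (oc (ε (δ (oc (ε S))))) := rfl
      _ ≤ δ (ε S) := hmono _ _ h2
      _ ≤ S := hcounit S
  intro S T
  constructor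
  · have := hkey (qstar δ ε oc S ⊔ qstar δ ε oc T)
    rw [sup_comm (qstar δ ε oc T)]
    exact this
  · refine le_antisymm le_top ?_
    have := hkey (qstar δ ε oc (qstar δ ε oc S))
    rw [← this]
    exact sup_le_sup le_rfl (hqq S)
end

section
/- Let H be a complete lattice and P : ℚ → H a family satisfying (i) ⨅_{r∈ℚ} P(r) = ⊥, (ii) ⨆_{r∈ℚ} P(r) = ⊤, and (iii) for every r ∈ ℚ, ⨅_{s∈ℚ, s>r} P(s) = P(r). Define E : ℝ → H by E(λ) = ⨅_{q∈ℚ, q>λ} P(q). Then (i') ⨅_{λ∈ℝ} E(λ) = ⊥, (ii') ⨆_{λ∈ℝ} E(λ) = ⊤, and (iii') for every λ ∈ ℝ, ⨅_{μ∈ℝ, μ>λ} E(μ) = E(λ). -/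
/-- From rational truth values `P q = ‖q̂ ∈ u‖` satisfying (i)-(iii), the family
`E λ = ⨅_{q > λ} P q` satisfies (i') `⨅_λ E λ = ⊥`, (ii') `⨆_λ E λ = ⊤`,
(iii') `⨅_{μ > λ} E μ = E λ`. -/
theorem spectral_family_from_rational_cuts
    {H : Type*} [CompleteLattice H] (P : ℚ → H)
    (h1 : (⨅ r : ℚ, P r) = ⊥)
    (h2 : (⨆ r : ℚ, P r) = ⊤)
    (h3 : ∀ r : ℚ, (⨅ (s : ℚ) (_ : r < s), P s) = P r) :
    ((⨅ l : ℝ, ⨅ (q : ℚ) (_ : l < (q : ℝ)), P q) = ⊥) ∧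
    ((⨆ l : ℝ, ⨅ (q : ℚ) (_ : l < (q : ℝ)), P q) = ⊤) ∧
    (∀ l : ℝ, (⨅ (μ : ℝ) (_ : l < μ), ⨅ (q : ℚ) (_ : μ < (q : ℝ)), P q) =
      ⨅ (q : ℚ) (_ : l < (q : ℝ)), P q) := by
  have hE : ∀ r : ℚ, (⨅ (q : ℚ) (_ : (r : ℝ) < (q : ℝ)), P q) = P r := by
    intro r
    simp only [Rat.cast_lt]
    exact h3 r
  refine ⟨?_, ?_, ?_⟩
  · apply le_bot_iff.mp
    rw [← h1]
    refine le_iInf fun r => ?_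
    refine iInf_le_of_le ((r : ℝ) - 1) ?_
    exact iInf_le_of_le r (iInf_le _ (by linarith))
  · apply top_le_iff.mp
    rw [← h2]
    refine iSup_le fun r => ?_
    exact le_iSup_of_le (r : ℝ) (hE r).ge
  · intro l
    apply le_antisymm
    · refine le_iInf fun q => le_iInf fun hq => ?_
      obtain ⟨μ, hμ1, hμ2⟩ := exists_between hq
      exact iInf_le_of_le μ (iInf_le_of_le hμ1 (iInf_le_of_le q (iInf_le _ hμ2)))
    · refine le_iInf fun μ => le_iInf fun hμ => le_iInf fun q => le_iInf fun hq => ?_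
      exact iInf_le_of_le q (iInf_le _ (hμ.trans hq))
end

section
/- Suppose δ is injective and δ(⊤) = ⊤. Let A : ℝ → L satisfy (1) A(λ₀) = ⊥ for some λ₀ ∈ ℝ, (2) ⨆_{λ∈ℝ} A(λ) = ⊤, and (3) for every λ ∈ ℝ, ⨆_{μ∈ℝ, μ<λ} A(μ) = A(λ) (a bounded-below, left-continuous spectral family). Define H_λ = δ(ε(δ(A(λ)))) for λ ∈ ℝ (which equals δ(A(λ)) since ε ∘ δ = id). Then (1') ⨅_{λ∈ℝ} H_λ = ⊥, (2') ⨆_{λ∈ℝ} H_λ = ⊤, and (3') for every λ ∈ ℝ, ⨆_{μ∈ℝ, μ<λ} H_μ = H_λ. -/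
/-- Given a bounded-below, left-continuous spectral family `A : ℝ → L`, the family
`H_λ = δ (ε (δ (A λ)))` in `H` satisfies (1') `⨅_λ H_λ = ⊥`, (2') `⨆_λ H_λ = ⊤`,
(3') `⨆_{μ < λ} H_μ = H_λ`. -/
theorem spectral_family_transfer
    {L H : Type*} [CompleteLattice L] [CompleteLattice H]
    (δ : L → H) (ε : H → L)
    (hδ : ∀ s : Set L, δ (sSup s) = ⨆ a ∈ s, δ a)
    (hε : ∀ S : H, ε S = sSup {a : L | δ a ≤ S})
    (hinj : Function.Injective δ) (hδtop : δ ⊤ = ⊤)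
    (A : ℝ → L)
    (h1 : ∃ l₀ : ℝ, A l₀ = ⊥)
    (h2 : (⨆ l : ℝ, A l) = ⊤)
    (h3 : ∀ l : ℝ, (⨆ (μ : ℝ) (_ : μ < l), A μ) = A l) :
    ((⨅ l : ℝ, δ (ε (δ (A l)))) = ⊥) ∧
    ((⨆ l : ℝ, δ (ε (δ (A l)))) = ⊤) ∧
    (∀ l : ℝ, (⨆ (μ : ℝ) (_ : μ < l), δ (ε (δ (A μ)))) = δ (ε (δ (A l)))) := by
  have hbot : δ ⊥ = ⊥ := by
    have := hδ ∅
    simpa using this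
  have hmono : Monotone δ := by
    intro a b hab
    have : δ (sSup {a, b}) = ⨆ x ∈ ({a, b} : Set L), δ x := hδ _
    have hsup : sSup ({a, b} : Set L) = b := by
      rw [sSup_pair, sup_eq_right.mpr hab]
    rw [hsup] at this
    rw [this]
    exact le_iSup₂ (f := fun x _ => δ x) a (by simp)
  have key : ∀ a : L, δ (ε (δ a)) = δ a := by
    intro a
    apply le_antisymm
    · rw [hε, hδ]
      exact iSup₂_le fun b hb => hb
    · apply hmono
      rw [hε]
      exact le_sSup (le_refl (δ a))
  refine ⟨?_, ?_, ?_⟩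
  · obtain ⟨l₀, hl₀⟩ := h1
    have : (⨅ l : ℝ, δ (ε (δ (A l)))) ≤ δ (ε (δ (A l₀))) := iInf_le _ l₀
    rw [key, hl₀, hbot] at this
    exact le_bot_iff.mp this
  · have : (⨆ l : ℝ, δ (ε (δ (A l)))) = ⨆ l : ℝ, δ (A l) := by
      simp_rw [key]
    rw [this]
    have h := hδ (Set.range A)
    have hr : sSup (Set.range A) = ⊤ := by rw [sSup_range]; exact h2
    rw [hr, hδtop, iSup_range] at h
    exact h.symm
  · intro l
    have heq : (⨆ (μ : ℝ) (_ : μ < l), δ (ε (δ (A μ)))) = ⨆ (μ : ℝ) (_ : μ < l), δ (A μ) := by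
      simp_rw [key]
    rw [heq, key]
    have h := hδ (A '' {μ | μ < l})
    rw [sSup_image] at h
    have hA : (⨆ a ∈ {μ | μ < l}, A a) = A l := by simpa using h3 l
    rw [hA] at h
    rw [h, iSup_image]
    simp only [Set.mem_setOf_eq]
end
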